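/- arXiv:2302.07063 — 2 statements merged into one kernel-verified Lean document; each statement's English description precedes it below -/
import Mathlib

section
/- Let n,d,k be positive integers with d ≤ n. If k=1 or d=1, then h_AR(n,d,k) = n. If k ≥ 2 and d ≥ 2, then h_AR(n,d,k) ≥ max{d, n(k−1)/k^d}. -/
open scoped Classical
noncomputable section

/-- Attributes are natural numbers. -/
abbrev Attr := ℕ
/-- A value in an equation system: `some δ` is a number, `none` is the special symbol `*`. -/
abbrev Val := Option ℕ
/-- A decision rule: left-hand side (set of equations attribute = numeric value) and
right-hand side (decision). -/
abbrev Rule := Finset (Attr × ℕ) × ℕ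
/-- An equation system over attributes with possibly `*` values. -/
abbrev EqSys := Finset (Attr × Val)
/-- A decision rule system. -/
abbrev DRS := Finset Rule

/-- The equation system `K(r)` of a rule. -/
def Kr (r : Rule) : EqSys := r.1.image fun p => (p.1, some p.2)
/-- The set `A(r)` of attributes of a rule. -/
def Ar (r : Rule) : Finset Attr := r.1.image Prod.fst
/-- The length of a rule. -/
def ruleLen (r : Rule) : ℕ := r.1.card
/-- Well-formed rule: attributes in the left-hand side are pairwise different. -/
def WFRule (r : Rule) : Prop := ∀ p ∈ r.1, ∀ q ∈ r.1, p.1 = q.1 → p.2 = q.2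
/-- Well-formed decision rule system: a finite nonempty set of well-formed rules. -/
def WFS (S : DRS) : Prop := S.Nonempty ∧ ∀ r ∈ S, WFRule r

/-- `A(S)`: attributes of a system. -/
def AS (S : DRS) : Finset Attr := S.biUnion Ar
/-- `n(S) = |A(S)|`. -/
def nS (S : DRS) : ℕ := (AS S).card
/-- `d(S)`: the maximum length of a rule in `S`. -/
def dS (S : DRS) : ℕ := S.sup ruleLen
/-- `V_S(a)`: values of attribute `a` occurring in `S`. -/
def VS (S : DRS) (a : Attr) : Finset ℕ :=
  S.biUnion fun r => (r.1.filter fun p => p.1 = a).image Prod.snd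
/-- `k(S)`: maximum number of values of a single attribute. -/
def kS (S : DRS) : ℕ := (AS S).sup fun a => (VS S a).card

/-- Branching sets of o-decision trees: `V_S(a)`. -/
def Bo (S : DRS) (a : Attr) : Finset Val := (VS S a).image some
/-- Branching sets of e-decision trees: `EV_S(a) = V_S(a) ∪ {*}`. -/
def Be (S : DRS) (a : Attr) : Finset Val := insert none (Bo S a)

/-- Consistency of an equation system. -/
def Consistent (K : EqSys) : Prop := ∀ p ∈ K, ∀ q ∈ K, p.1 = q.1 → p.2 = q.2

/-- Decision trees: terminal nodes labeled with sets of rules, working nodes labeled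
with an attribute and having a child for each possible value (only children whose
labels lie in the relevant branching set are meaningful). -/
inductive DTree where
  | leaf : DRS → DTree
  | node : Attr → (Val → DTree) → DTree

/-- Depth of a decision tree with respect to branching sets `B`. -/
def depthT (B : Attr → Finset Val) : DTree → ℕ
  | .leaf _ => 0
  | .node a c => ((B a).sup fun v => depthT B (c v)) + 1

/-- A decision tree over a system `S` (with branching sets `B`). -/
def TreeOver (B : Attr → Finset Val) (S : DRS) : DTree → Prop
  | .leaf Z => Z ⊆ S
  | .node a c => a ∈ AS S ∧ ∀ v ∈ B a, TreeOver B S (c v)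

/-- `PathT B Γ K Z`: there is a complete path in `Γ` (following edges with labels
in the branching sets `B`) with equation system `K` and terminal label `Z`. -/
inductive PathT (B : Attr → Finset Val) : DTree → EqSys → DRS → Prop
  | leaf (Z : DRS) : PathT B (.leaf Z) ∅ Z
  | node (a : Attr) (c : Val → DTree) (v : Val) (K : EqSys) (Z : DRS) :
      v ∈ B a → PathT B (c v) K Z → PathT B (.node a c) (insert (a, v) K) Z

/-- `Γ` solves the problem given by correctness condition `cond` on (K(ξ), τ(ξ)). -/
def Solves (cond : EqSys → DRS → Prop) (B : Attr → Finset Val) (Γ : DTree) : Prop :=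
  ∀ K Z, PathT B Γ K Z → Consistent K → cond K Z

/-- Correctness condition for the All Rules problem. -/
def CondAR (S : DRS) (K : EqSys) (Z : DRS) : Prop :=
  (∀ r ∈ Z, Kr r ⊆ K) ∧ ∀ r ∈ S, r ∉ Z → ¬ Consistent (Kr r ∪ K)
/-- Correctness condition for the All Decisions problem. -/
def CondAD (S : DRS) (K : EqSys) (Z : DRS) : Prop :=
  (∀ r ∈ Z, Kr r ⊆ K) ∧ ∀ r ∈ S, r.2 ∉ Z.image Prod.snd → ¬ Consistent (Kr r ∪ K)
/-- Correctness condition for the Some Rules problem. -/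
def CondSR (S : DRS) (K : EqSys) (Z : DRS) : Prop :=
  (∀ r ∈ Z, Kr r ⊆ K) ∧ (Z = ∅ → ∀ r ∈ S, ¬ Consistent (Kr r ∪ K))

/-- Minimum depth of a decision tree over `S` solving the given problem. -/
def hgen (cond : DRS → EqSys → DRS → Prop) (B : DRS → Attr → Finset Val) (S : DRS) : ℕ :=
  sInf {m | ∃ Γ, TreeOver (B S) S Γ ∧ Solves (cond S) (B S) Γ ∧ depthT (B S) Γ = m}

def hAR (S : DRS) : ℕ := hgen CondAR Bo S
def hEAR (S : DRS) : ℕ := hgen CondAR Be S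
def hAD (S : DRS) : ℕ := hgen CondAD Bo S
def hEAD (S : DRS) : ℕ := hgen CondAD Be S
def hSR (S : DRS) : ℕ := hgen CondSR Bo S
def hESR (S : DRS) : ℕ := hgen CondSR Be S

/-- SR-reduced system. -/
def SRred (S : DRS) : Prop := ∀ r ∈ S, ¬ ∃ r' ∈ S, r'.1 ⊂ r.1
/-- AD-reduced system. -/
def ADred (S : DRS) : Prop := ∀ r ∈ S, ¬ ∃ r' ∈ S, r'.1 ⊂ r.1 ∧ r'.2 = r.2
/-- `R_SR(S)`. -/
def RSR (S : DRS) : DRS := S.filter fun r => ¬ ∃ r' ∈ S, r'.1 ⊂ r.1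
/-- `R_AD(S)`. -/
def RAD (S : DRS) : DRS := S.filter fun r => ¬ ∃ r' ∈ S, r'.1 ⊂ r.1 ∧ r'.2 = r.2

/-- `h_C(n,d,k)`: minimum of `h S` over systems with the given parameters. -/
def hmin (h : DRS → ℕ) (n d k : ℕ) : ℕ :=
  sInf {m | ∃ S, WFS S ∧ nS S = n ∧ dS S = d ∧ kS S = k ∧ h S = m}
/-- `H_C(n,d,k)`: maximum of `h S` over systems with the given parameters. -/
def Hmax (h : DRS → ℕ) (n d k : ℕ) : ℕ :=
  sSup {m | ∃ S, WFS S ∧ nS S = n ∧ dS S = d ∧ kS S = k ∧ h S = m}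
/-- `h_C^R(n,d,k)`: minimum of `h S` over reduced systems (`P`) with given parameters. -/
def hminR (h : DRS → ℕ) (P : DRS → Prop) (n d k : ℕ) : ℕ :=
  sInf {m | ∃ S, WFS S ∧ P S ∧ nS S = n ∧ dS S = d ∧ kS S = k ∧ h S = m}
/-- `H_C^R(n,d,k)`: maximum of `h S` over reduced systems (`P`) with given parameters. -/
def HmaxR (h : DRS → ℕ) (P : DRS → Prop) (n d k : ℕ) : ℕ :=
  sSup {m | ∃ S, WFS S ∧ P S ∧ nS S = n ∧ dS S = d ∧ kS S = k ∧ h S = m}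

/-- Node cover of the hypergraph `G(S)`. -/
def NodeCover (S : DRS) (B : Finset Attr) : Prop :=
  B ⊆ AS S ∧ ∀ r ∈ S, Ar r ≠ ∅ → (Ar r ∩ B).Nonempty
/-- `β(S)`: minimum cardinality of a node cover of `G(S)`. -/
def nodeCoverNum (S : DRS) : ℕ := sInf {m | ∃ B, NodeCover S B ∧ B.card = m}

/-- `I_SR(S)`. -/
def ISR (S : DRS) : DRS := if ∀ r ∈ S, r.1 ≠ ∅ then S else S.filter fun r => r.1 = ∅
/-- `D_0(S)`: right-hand sides of length-0 rules. -/
def D0 (S : DRS) : Finset ℕ := (S.filter fun r => r.1 = ∅).image Prod.snd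
/-- `I_AD(S)`. -/
def IAD (S : DRS) : DRS := S.filter fun r => r.1 = ∅ ∨ r.2 ∉ D0 S

/-- `K(S, δ̄)` for an assignment `f` of numeric values to all attributes of `S`. -/
def KStuple (S : DRS) (f : Attr → ℕ) : EqSys := (AS S).image fun a => (a, some (f a))
/-- An incomplete decision rule system. -/
def IncompleteS (S : DRS) : Prop :=
  ∃ f : Attr → ℕ, (∀ a ∈ AS S, f a ∈ VS S a) ∧ ∀ r ∈ S, ¬ Consistent (Kr r ∪ KStuple S f)

/-- `r_α`: remove from the left-hand side of `r` all equations belonging to `α`. -/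
def resRule (α : EqSys) (r : Rule) : Rule :=
  (r.1.filter fun p => (p.1, (some p.2 : Val)) ∉ α, r.2)
/-- `S_α`: rules `r_α` for the rules `r ∈ S` with `K(r) ∪ α` consistent. -/
def Sres (α : EqSys) (S : DRS) : DRS :=
  (S.filter fun r => Consistent (Kr r ∪ α)).image (resRule α)

/-- Value chosen at a node labeled by an attribute `a ∉ A(S_α)` when building `Γ_α`:
the `α`-value of `a` if `a` occurs in `α`, and the minimum number of `V_S(a)` otherwise. -/
def chooseVal (α : EqSys) (S : DRS) (a : Attr) : Val :=
  if h : ∃ v, (a, v) ∈ α then Classical.choose h else some (sInf {n : ℕ | n ∈ VS S a})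

/-- The decision tree `Γ_α`. -/
def resTree (α : EqSys) (S : DRS) : DTree → DTree
  | .leaf Z => .leaf (Sres α Z)
  | .node a c =>
      if a ∈ AS (Sres α S) then .node a fun v => resTree α S (c v)
      else resTree α S (c (chooseVal α S a))

/-- The o-decision tree `o(Γ)`: remove all nodes reachable only via an edge labeled `*`. -/
def oTree : DTree → DTree
  | .leaf Z => .leaf Z
  | .node a c => .node a fun v => match v with
      | none => .leaf ∅
      | some x => oTree (c (some x))

/-!
Follow the path of a tuple `f` of values occurring in `S` through a tree solving `AR(S)`. If
a rule `r` is satisfied by `f` except possibly at its attribute `a`, the path must query `a`: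
otherwise its equations are consistent with `r`, so the tree can neither return `r` (not all of
its equations are known) nor rule it out. A tuple extending a longest rule thus forces `d(S)`
queries, and if `k(S) = 1` or `d(S) = 1` every attribute is forced for every tuple, while
querying all attributes always suffices. In general, fixing the `≤ d(S) - 1` other equations of
a rule through `a` shows that `a` is forced for at least a `k(S)^(1 - d(S))` fraction of all
tuples; double counting gives `n(S) ≤ k(S)^(d(S)-1) h_AR(S)`. A system with the prescribed
parameters exists, so `h_AR(n,d,k)` is attained.
-/

open Finset

lemma mem_VS_iff {S : DRS} {a : Attr} {c : ℕ} : c ∈ VS S a ↔ ∃ r ∈ S, (a, c) ∈ r.1 := by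
  simp only [VS, mem_biUnion, mem_image, mem_filter]
  constructor
  · rintro ⟨r, hr, p, ⟨hp, rfl⟩, rfl⟩
    exact ⟨r, hr, hp⟩
  · rintro ⟨r, hr, hp⟩
    exact ⟨r, hr, _, ⟨hp, rfl⟩, rfl⟩

lemma mem_VS_of_mem {S : DRS} {r : Rule} {p : Attr × ℕ} (hr : r ∈ S) (hp : p ∈ r.1) :
    p.2 ∈ VS S p.1 :=
  mem_VS_iff.2 ⟨r, hr, hp⟩

lemma mem_Ar_of_mem {r : Rule} {p : Attr × ℕ} (hp : p ∈ r.1) : p.1 ∈ Ar r :=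
  mem_image_of_mem _ hp

lemma mem_AS_of_mem {S : DRS} {r : Rule} {a : Attr} (hr : r ∈ S) (ha : a ∈ Ar r) : a ∈ AS S :=
  mem_biUnion.2 ⟨r, hr, ha⟩

lemma mem_AS_iff {S : DRS} {a : Attr} : a ∈ AS S ↔ ∃ c, ∃ r ∈ S, (a, c) ∈ r.1 := by
  constructor
  · intro ha
    obtain ⟨r, hr, har⟩ := mem_biUnion.1 ha
    obtain ⟨p, hp, rfl⟩ := mem_image.1 har
    exact ⟨p.2, r, hr, hp⟩
  · rintro ⟨c, r, hr, hc⟩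
    exact mem_AS_of_mem hr (mem_Ar_of_mem hc)

lemma VS_nonempty {S : DRS} {a : Attr} (ha : a ∈ AS S) : (VS S a).Nonempty := by
  obtain ⟨r, hr, har⟩ := mem_biUnion.1 ha
  obtain ⟨p, hp, rfl⟩ := mem_image.1 har
  exact ⟨p.2, mem_VS_of_mem hr hp⟩

lemma card_VS_le_kS {S : DRS} {a : Attr} (ha : a ∈ AS S) : #(VS S a) ≤ kS S :=
  le_sup (f := fun a => #(VS S a)) ha

lemma ruleLen_le_dS {S : DRS} {r : Rule} (hr : r ∈ S) : ruleLen r ≤ dS S :=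
  le_sup hr

lemma card_Ar_eq_ruleLen {r : Rule} (hr : WFRule r) : #(Ar r) = ruleLen r :=
  card_image_of_injOn fun p hp q hq hpq => Prod.ext hpq (hr p hp q hq hpq)

lemma consistent_Kr {r : Rule} (hr : WFRule r) : Consistent (Kr r) := by
  simp only [Consistent, Kr, mem_image]
  rintro _ ⟨p, hp, rfl⟩ _ ⟨q, hq, rfl⟩ hpq
  simp [hr p hp q hq hpq]

/-! ### The upper bound `h_AR(S) ≤ n(S)` -/

def fullTree (S : DRS) : List Attr → EqSys → DTree
  | [], K => .leaf (S.filter fun r => Kr r ⊆ K)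
  | a :: l, K => .node a fun v => fullTree S l (insert (a, v) K)

lemma treeOver_fullTree (S : DRS) {l : List Attr} (hl : ∀ a ∈ l, a ∈ AS S) (K : EqSys) :
    TreeOver (Bo S) S (fullTree S l K) := by
  induction l generalizing K with
  | nil => exact filter_subset _ _
  | cons a l ih =>
    exact ⟨hl a List.mem_cons_self,
      fun v _ => ih (fun b hb => hl b (List.mem_cons_of_mem a hb)) _⟩

lemma depthT_fullTree_le (S : DRS) (l : List Attr) (K : EqSys) :
    depthT (Bo S) (fullTree S l K) ≤ l.length := by
  induction l generalizing K with
  | nil => simp [fullTree, depthT]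
  | cons a l ih =>
    simpa [fullTree, depthT] using fun v _ => ih (insert (a, v) K)

lemma pathT_fullTree (S : DRS) {l : List Attr} {K₀ K : EqSys} {Z : DRS}
    (h : PathT (Bo S) (fullTree S l K₀) K Z) :
    Z = S.filter (fun r => Kr r ⊆ K₀ ∪ K) ∧ ∀ b ∈ l, ∃ v, (b, v) ∈ K := by
  induction l generalizing K₀ K with
  | nil =>
    cases h
    simp
  | cons a l ih =>
    cases h with
    | node _ _ v K Z _ hp =>
      obtain ⟨hZ, hl⟩ := ih hp
      refine ⟨by rw [hZ, insert_union, union_insert], ?_⟩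
      rintro b (_ | ⟨_, hb⟩)
      · exact ⟨v, mem_insert_self _ _⟩
      · obtain ⟨w, hw⟩ := hl b hb
        exact ⟨w, mem_insert_of_mem hw⟩

lemma solves_fullTree (S : DRS) : Solves (CondAR S) (Bo S) (fullTree S (AS S).toList ∅) := by
  intro K Z hp _
  obtain ⟨rfl, hl⟩ := pathT_fullTree S hp
  refine ⟨fun r hr => by simpa using (mem_filter.1 hr).2, fun r hr hrZ hcons => hrZ ?_⟩
  refine mem_filter.2 ⟨hr, fun x hx => ?_⟩
  obtain ⟨p, hp, rfl⟩ := mem_image.1 hx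
  obtain ⟨v, hv⟩ := hl p.1 (mem_toList.2 (mem_AS_of_mem hr (mem_Ar_of_mem hp)))
  have : some p.2 = v := hcons _ (mem_union_left _ hx) _ (mem_union_right _ hv) rfl
  simpa [this] using hv

lemma exists_tree_depthT_le_nS (S : DRS) :
    ∃ Γ, TreeOver (Bo S) S Γ ∧ Solves (CondAR S) (Bo S) Γ ∧ depthT (Bo S) Γ ≤ nS S :=
  ⟨_, treeOver_fullTree S (fun _ => mem_toList.1) ∅, solves_fullTree S,
    (depthT_fullTree_le S _ ∅).trans_eq (length_toList _)⟩

lemma hAR_le_depthT {S : DRS} {Γ : DTree} (hΓ : TreeOver (Bo S) S Γ)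
    (hsol : Solves (CondAR S) (Bo S) Γ) : hAR S ≤ depthT (Bo S) Γ :=
  Nat.sInf_le (s := {m | ∃ Γ, TreeOver (Bo S) S Γ ∧ Solves (CondAR S) (Bo S) Γ ∧
    depthT (Bo S) Γ = m}) ⟨Γ, hΓ, hsol, rfl⟩

lemma hAR_le_nS (S : DRS) : hAR S ≤ nS S := by
  obtain ⟨Γ, hΓ, hsol, hdepth⟩ := exists_tree_depthT_le_nS S
  exact (hAR_le_depthT hΓ hsol).trans hdepth

lemma exists_tree_depthT_eq_hAR (S : DRS) :
    ∃ Γ, TreeOver (Bo S) S Γ ∧ Solves (CondAR S) (Bo S) Γ ∧ depthT (Bo S) Γ = hAR S := by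
  obtain ⟨Γ, hΓ, hsol, -⟩ := exists_tree_depthT_le_nS S
  exact Nat.sInf_mem (s := {m | ∃ Γ, TreeOver (Bo S) S Γ ∧ Solves (CondAR S) (Bo S) Γ ∧
    depthT (Bo S) Γ = m}) ⟨_, Γ, hΓ, hsol, rfl⟩

/-! ### Lower bounds -/

def AgreesExcept (f : Attr → ℕ) (r : Rule) (a : Attr) : Prop :=
  ∀ p ∈ r.1, p.1 ≠ a → f p.1 = p.2

lemma exists_pathT_of_tuple {S : DRS} {f : Attr → ℕ} (hf : ∀ a ∈ AS S, f a ∈ VS S a) :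
    ∀ Γ, TreeOver (Bo S) S Γ → ∃ K Z, PathT (Bo S) Γ K Z ∧
      (∀ p ∈ K, p.2 = some (f p.1)) ∧ #K ≤ depthT (Bo S) Γ
  | .leaf Z, _ => ⟨∅, Z, .leaf Z, by simp, by simp⟩
  | .node a c, ⟨ha, hc⟩ => by
    have hfa : some (f a) ∈ Bo S a := mem_image_of_mem _ (hf a ha)
    obtain ⟨K, Z, hp, hK, hcard⟩ := exists_pathT_of_tuple hf _ (hc _ hfa)
    refine ⟨_, Z, .node a c _ K Z hfa hp, ?_, ?_⟩
    · simpa using hK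
    · have := le_sup (f := fun v => depthT (Bo S) (c v)) hfa
      simp only [depthT]
      linarith [card_insert_le (a, some (f a)) K]

lemma consistent_Kr_union_of_agreesExcept {r : Rule} {K : EqSys} {f : Attr → ℕ} {a : Attr}
    (hr : WFRule r) (hK : ∀ p ∈ K, p.2 = some (f p.1)) (hfr : AgreesExcept f r a)
    (ha : a ∉ K.image Prod.fst) : Consistent (Kr r ∪ K) := by
  have key : ∀ p ∈ Kr r ∪ K, p ∈ Kr r ∧ p.1 = a ∨ p.1 ≠ a ∧ p.2 = some (f p.1) := by
    intro p hp
    rcases mem_union.1 hp with hp | hp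
    · by_cases hpa : p.1 = a
      · exact .inl ⟨hp, hpa⟩
      · obtain ⟨q, hq, rfl⟩ := mem_image.1 hp
        exact .inr ⟨hpa, by simp [hfr q hq hpa]⟩
    · exact .inr ⟨fun h => ha (mem_image.2 ⟨p, hp, h⟩), hK p hp⟩
  intro p hp q hq hpq
  rcases key p hp with ⟨hp, hpa⟩ | ⟨hpa, hpf⟩
  · rcases key q hq with ⟨hq, -⟩ | ⟨hqa, -⟩
    · exact consistent_Kr hr p hp q hq hpq
    · exact absurd (hpq ▸ hpa) hqa
  · rcases key q hq with ⟨-, hqa⟩ | ⟨-, hqf⟩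
    · exact absurd (hpq ▸ hqa) hpa
    · rw [hpf, hqf, hpq]

lemma mem_image_fst_of_agreesExcept {S : DRS} {Γ : DTree} {K : EqSys} {Z : DRS}
    {f : Attr → ℕ} {r : Rule} {a : Attr} (hsol : Solves (CondAR S) (Bo S) Γ)
    (hp : PathT (Bo S) Γ K Z) (hK : ∀ p ∈ K, p.2 = some (f p.1)) (hr : r ∈ S)
    (hwf : WFRule r) (ha : a ∈ Ar r) (hfr : AgreesExcept f r a) :
    a ∈ K.image Prod.fst := by
  have hKcons : Consistent K := fun p hp q hq hpq => by rw [hK p hp, hK q hq, hpq]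
  obtain ⟨hZ, hnotZ⟩ := hsol K Z hp hKcons
  by_contra haK
  by_cases hrZ : r ∈ Z
  · obtain ⟨p, hp, rfl⟩ := mem_image.1 ha
    exact haK (mem_image.2 ⟨_, hZ r hrZ (mem_image_of_mem _ hp), rfl⟩)
  · exact hnotZ r hr hrZ (consistent_Kr_union_of_agreesExcept hwf hK hfr haK)

theorem card_le_hAR_of_agreesExcept {S : DRS} {f : Attr → ℕ} {T : Finset Attr} (hS : WFS S)
    (hf : ∀ a ∈ AS S, f a ∈ VS S a)
    (hT : ∀ a ∈ T, ∃ r ∈ S, a ∈ Ar r ∧ AgreesExcept f r a) :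
    #T ≤ hAR S := by
  obtain ⟨Γ, hΓ, hsol, hdepth⟩ := exists_tree_depthT_eq_hAR S
  obtain ⟨K, Z, hp, hK, hcard⟩ := exists_pathT_of_tuple hf Γ hΓ
  have hTK : T ⊆ K.image Prod.fst := fun a ha => by
    obtain ⟨r, hr, har, hfr⟩ := hT a ha
    exact mem_image_fst_of_agreesExcept hsol hp hK hr (hS.2 r hr) har hfr
  calc #T ≤ #(K.image Prod.fst) := card_le_card hTK
    _ ≤ #K := card_image_le
    _ ≤ hAR S := hdepth ▸ hcard

lemma exists_mem_VS_agrees {S : DRS} {r : Rule} {b : Attr} (hr : r ∈ S) (hwf : WFRule r)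
    (hb : b ∈ AS S) : ∃ c ∈ VS S b, ∀ p ∈ r.1, p.1 = b → p.2 = c := by
  by_cases h : ∃ p ∈ r.1, p.1 = b
  · obtain ⟨p, hp, rfl⟩ := h
    exact ⟨p.2, mem_VS_of_mem hr hp, fun q hq hqp => hwf q hq p hp hqp⟩
  · obtain ⟨c, hc⟩ := VS_nonempty hb
    exact ⟨c, hc, fun p hp hpb => absurd ⟨p, hp, hpb⟩ h⟩

theorem dS_le_hAR {S : DRS} (hS : WFS S) : dS S ≤ hAR S := by
  obtain ⟨r, hr, hlen⟩ := exists_mem_eq_sup S hS.1 ruleLen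
  choose! f hf hfr using fun b (hb : b ∈ AS S) => exists_mem_VS_agrees hr (hS.2 r hr) hb
  have hT : ∀ a ∈ Ar r, ∃ r' ∈ S, a ∈ Ar r' ∧ AgreesExcept f r' a := fun a ha =>
    ⟨r, hr, ha, fun p hp _ => (hfr p.1 (mem_AS_of_mem hr (mem_Ar_of_mem hp)) p hp rfl).symm⟩
  have := card_le_hAR_of_agreesExcept hS hf hT
  rwa [card_Ar_eq_ruleLen (hS.2 r hr), ← hlen] at this

theorem nS_le_hAR {S : DRS} (hS : WFS S) (h : kS S = 1 ∨ dS S = 1) : nS S ≤ hAR S := by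
  choose! f hf using fun b (hb : b ∈ AS S) => VS_nonempty hb
  refine card_le_hAR_of_agreesExcept hS hf fun a ha => ?_
  obtain ⟨r, hr, har⟩ := mem_biUnion.1 ha
  refine ⟨r, hr, har, fun p hp hpa => ?_⟩
  rcases h with hk | hd
  · have hb := mem_AS_of_mem hr (mem_Ar_of_mem hp)
    exact card_le_one.1 (hk ▸ card_VS_le_kS hb) _ (hf _ hb) _ (mem_VS_of_mem hr hp)
  · obtain ⟨q, hq, rfl⟩ := mem_image.1 har
    exact absurd (congrArg Prod.fst (card_le_one.1 (hd ▸ ruleLen_le_dS hr) p hp q hq)) hpa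

/-! ### Counting tuples: `n(S) ≤ k(S)^(d(S)-1) h_AR(S)` -/

def agreeingValues (S : DRS) (r : Rule) (a b : Attr) : Finset ℕ :=
  (VS S b).filter fun c => b ≠ a → ∀ p ∈ r.1, p.1 = b → p.2 = c

lemma card_VS_le_mul_card_agreeingValues {S : DRS} {r : Rule} {a b : Attr} (hr : r ∈ S)
    (hwf : WFRule r) (hb : b ∈ AS S) :
    #(VS S b) ≤ (if b ∈ (Ar r).erase a then kS S else 1) * #(agreeingValues S r a b) := by
  split_ifs with hbr
  · obtain ⟨c, hc, hcr⟩ := exists_mem_VS_agrees hr hwf hb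
    have : 0 < #(agreeingValues S r a b) := card_pos.2 ⟨c, mem_filter.2 ⟨hc, fun _ => hcr⟩⟩
    nlinarith [card_VS_le_kS hb]
  · have : agreeingValues S r a b = VS S b := filter_true_of_mem fun c _ hba p hp hpb =>
      absurd (mem_erase.2 ⟨hba, hpb ▸ mem_Ar_of_mem hp⟩) hbr
    rw [this, one_mul]

lemma card_pi_VS_le {S : DRS} {r : Rule} {a : Attr} (hr : r ∈ S) (hwf : WFRule r)
    (ha : a ∈ Ar r) :
    #((AS S).pi (VS S)) ≤ kS S ^ (dS S - 1) * #((AS S).pi (agreeingValues S r a)) := by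
  have hT : (Ar r).erase a ⊆ AS S := fun b hb => mem_AS_of_mem hr (mem_of_mem_erase hb)
  have hTcard : #((Ar r).erase a) ≤ dS S - 1 := by
    have := (card_image_le (s := r.1) (f := Prod.fst)).trans (ruleLen_le_dS hr)
    rw [card_erase_of_mem ha]
    exact Nat.sub_le_sub_right this 1
  have hk : 1 ≤ kS S :=
    (card_pos.2 (VS_nonempty (mem_AS_of_mem hr ha))).trans_le (card_VS_le_kS (mem_AS_of_mem hr ha))
  rw [card_pi, card_pi]
  calc ∏ b ∈ AS S, #(VS S b)
      ≤ ∏ b ∈ AS S, (if b ∈ (Ar r).erase a then kS S else 1) * #(agreeingValues S r a b) :=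
        prod_le_prod' fun b hb => card_VS_le_mul_card_agreeingValues hr hwf hb
    _ = kS S ^ #((Ar r).erase a) * ∏ b ∈ AS S, #(agreeingValues S r a b) := by
        rw [prod_mul_distrib, prod_ite_mem, inter_eq_right.2 hT, prod_const]
    _ ≤ _ := Nat.mul_le_mul_right _ (Nat.pow_le_pow_right hk hTcard)

def extendTuple {A : Finset Attr} (g : ∀ a ∈ A, ℕ) (b : Attr) : ℕ :=
  if h : b ∈ A then g b h else 0

lemma extendTuple_mem_VS {S : DRS} {g : ∀ a ∈ AS S, ℕ} (hg : g ∈ (AS S).pi (VS S)) :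
    ∀ b ∈ AS S, extendTuple g b ∈ VS S b := fun b hb => by
  simpa [extendTuple, hb] using mem_pi.1 hg b hb

lemma agreesExcept_extendTuple {S : DRS} {r : Rule} {a : Attr} {g : ∀ a ∈ AS S, ℕ}
    (hr : r ∈ S) (hg : g ∈ (AS S).pi (agreeingValues S r a)) :
    AgreesExcept (extendTuple g) r a := fun p hp hpa => by
  have hb := mem_AS_of_mem hr (mem_Ar_of_mem hp)
  have := (mem_filter.1 (mem_pi.1 hg p.1 hb)).2 hpa p hp rfl
  simp [extendTuple, hb, this]

theorem nS_le_pow_mul_hAR {S : DRS} (hS : WFS S) : nS S ≤ kS S ^ (dS S - 1) * hAR S := by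
  set P := (AS S).pi (VS S)
  let R : Attr → (∀ a ∈ AS S, ℕ) → Prop := fun a g =>
    ∃ r ∈ S, a ∈ Ar r ∧ AgreesExcept (extendTuple g) r a
  have hcol : ∀ a ∈ AS S, #P ≤ kS S ^ (dS S - 1) * #(P.bipartiteAbove R a) := by
    intro a ha
    obtain ⟨r, hr, har⟩ := mem_biUnion.1 ha
    refine (card_pi_VS_le hr (hS.2 r hr) har).trans
      (Nat.mul_le_mul_left _ (card_le_card fun g hg => ?_))
    exact mem_filter.2 ⟨pi_subset _ _ (fun b _ => filter_subset _ _) hg,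
      r, hr, har, agreesExcept_extendTuple hr hg⟩
  have hrow : ∀ g ∈ P, #((AS S).bipartiteBelow R g) ≤ hAR S := fun g hg =>
    card_le_hAR_of_agreesExcept hS (extendTuple_mem_VS hg) fun a ha => (mem_filter.1 ha).2
  have hP : 0 < #P := by
    rw [card_pi]
    exact prod_pos fun b hb => card_pos.2 (VS_nonempty hb)
  refine le_of_mul_le_mul_right ?_ hP
  calc nS S * #P = ∑ _a ∈ AS S, #P := by rw [sum_const, smul_eq_mul, nS]
    _ ≤ ∑ a ∈ AS S, kS S ^ (dS S - 1) * #(P.bipartiteAbove R a) := sum_le_sum hcol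
    _ = kS S ^ (dS S - 1) * ∑ g ∈ P, #((AS S).bipartiteBelow R g) := by
        rw [← mul_sum, sum_card_bipartiteAbove_eq_sum_card_bipartiteBelow]
    _ ≤ kS S ^ (dS S - 1) * ∑ _g ∈ P, hAR S := Nat.mul_le_mul_left _ (sum_le_sum hrow)
    _ = kS S ^ (dS S - 1) * hAR S * #P := by rw [sum_const, smul_eq_mul]; ring

/-! ### A system with parameters `(n, d, k)` -/

def witnessSystem (n d k : ℕ) : DRS :=
  insert (range d ×ˢ {0}, 0) ((range n ×ˢ {0} ∪ {0} ×ˢ range k).image fun p => ({p}, 0))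

lemma exists_mem_witnessSystem_iff {n d k : ℕ} (hdn : d ≤ n) {a : Attr} {c : ℕ} :
    (∃ r ∈ witnessSystem n d k, (a, c) ∈ r.1) ↔ a < n ∧ c = 0 ∨ a = 0 ∧ c < k := by
  simp only [witnessSystem, exists_mem_insert, exists_mem_image, mem_union, mem_product,
    mem_range, mem_singleton]
  constructor
  · rintro (h | ⟨p, hp, rfl⟩)
    exacts [.inl ⟨h.1.trans_le hdn, h.2⟩, hp]
  · exact fun h => .inr ⟨(a, c), h, rfl⟩

section witnessSystem

variable {n d k : ℕ}

lemma AS_witnessSystem (hn : 0 < n) (hdn : d ≤ n) : AS (witnessSystem n d k) = range n := by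
  ext a
  simp only [mem_AS_iff, exists_mem_witnessSystem_iff hdn, mem_range]
  constructor
  · rintro ⟨c, ⟨ha, -⟩ | ⟨rfl, -⟩⟩
    exacts [ha, hn]
  · exact fun ha => ⟨0, .inl ⟨ha, rfl⟩⟩

lemma VS_witnessSystem_subset (hk : 0 < k) (hdn : d ≤ n) (a : Attr) :
    VS (witnessSystem n d k) a ⊆ range k := fun c hc => by
  rw [mem_VS_iff, exists_mem_witnessSystem_iff hdn] at hc
  rcases hc with ⟨-, rfl⟩ | ⟨-, hc⟩
  exacts [mem_range.2 hk, mem_range.2 hc]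

lemma range_subset_VS_witnessSystem (hdn : d ≤ n) : range k ⊆ VS (witnessSystem n d k) 0 :=
  fun c hc => by
    rw [mem_VS_iff, exists_mem_witnessSystem_iff hdn]
    exact .inr ⟨rfl, mem_range.1 hc⟩

lemma nS_witnessSystem (hn : 0 < n) (hdn : d ≤ n) : nS (witnessSystem n d k) = n := by
  rw [nS, AS_witnessSystem hn hdn, card_range]

lemma kS_witnessSystem (hn : 0 < n) (hk : 0 < k) (hdn : d ≤ n) :
    kS (witnessSystem n d k) = k := by
  refine le_antisymm (Finset.sup_le fun a _ => ?_) ?_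
  · exact (card_le_card (VS_witnessSystem_subset hk hdn a)).trans_eq (card_range k)
  · have h0 : 0 ∈ AS (witnessSystem n d k) := by
      rw [AS_witnessSystem hn hdn]
      exact mem_range.2 hn
    calc k = #(range k) := (card_range k).symm
      _ ≤ _ := card_le_card (range_subset_VS_witnessSystem hdn)
      _ ≤ _ := card_VS_le_kS h0

lemma dS_witnessSystem (hd : 0 < d) : dS (witnessSystem n d k) = d := by
  have hlen : ruleLen (range d ×ˢ {0}, 0) = d := by simp [ruleLen]
  have hmem : (range d ×ˢ {0}, 0) ∈ witnessSystem n d k := mem_insert_self _ _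
  refine le_antisymm (Finset.sup_le fun r hr => ?_) (hlen.ge.trans (le_sup hmem))
  obtain rfl | ⟨p, -, rfl⟩ := mem_insert.1 hr |>.imp_right mem_image.1
  · exact hlen.le
  · exact (card_singleton p).trans_le hd

lemma wfs_witnessSystem : WFS (witnessSystem n d k) := by
  refine ⟨insert_nonempty _ _, fun r hr => ?_⟩
  obtain rfl | ⟨p, -, rfl⟩ := mem_insert.1 hr |>.imp_right mem_image.1
  · intro p hp q hq _
    simp only [mem_product, mem_singleton] at hp hq
    rw [hp.2, hq.2]
  · intro p hp q hq _
    rw [mem_singleton.1 hp, mem_singleton.1 hq]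

end witnessSystem

lemma exists_eq_hmin (h : DRS → ℕ) {n d k : ℕ}
    (hne : ∃ S, WFS S ∧ nS S = n ∧ dS S = d ∧ kS S = k) :
    ∃ S, WFS S ∧ nS S = n ∧ dS S = d ∧ kS S = k ∧ h S = hmin h n d k := by
  obtain ⟨S, hS, hn, hd, hk⟩ := hne
  exact Nat.sInf_mem (s := {m | ∃ S, WFS S ∧ nS S = n ∧ dS S = d ∧ kS S = k ∧ h S = m})
    ⟨h S, S, hS, hn, hd, hk, rfl⟩

lemma hmin_le (h : DRS → ℕ) {S : DRS} (hS : WFS S) : hmin h (nS S) (dS S) (kS S) ≤ h S :=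
  Nat.sInf_le ⟨S, hS, rfl, rfl, rfl, rfl⟩

/-- lower bounds on `h_AR(n,d,k)`. -/
theorem stmt14 (n d k : ℕ) (hn : 0 < n) (hd : 0 < d) (hk : 0 < k) (hdn : d ≤ n) :
    ((k = 1 ∨ d = 1) → hmin hAR n d k = n) ∧
    (2 ≤ k → 2 ≤ d →
      max (d : ℝ) ((n : ℝ) * ((k : ℝ) - 1) / (k : ℝ) ^ d) ≤ (hmin hAR n d k : ℝ)) := by
  set W := witnessSystem n d k
  have hnW : nS W = n := nS_witnessSystem hn hdn
  have hdW : dS W = d := dS_witnessSystem hd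
  have hkW : kS W = k := kS_witnessSystem hn hk hdn
  obtain ⟨S, hS, rfl, rfl, rfl, hSmin⟩ :=
    exists_eq_hmin hAR ⟨W, wfs_witnessSystem, hnW, hdW, hkW⟩
  rw [← hSmin]
  refine ⟨fun h1 => le_antisymm ?_ (nS_le_hAR hS h1), fun _ _ => max_le ?_ ?_⟩
  · calc hAR S = hmin hAR (nS W) (dS W) (kS W) := by rw [hnW, hdW, hkW, hSmin]
      _ ≤ hAR W := hmin_le hAR wfs_witnessSystem
      _ ≤ nS S := hnW ▸ hAR_le_nS W
  · exact_mod_cast dS_le_hAR hS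
  · have hcount : (nS S : ℝ) ≤ kS S ^ (dS S - 1) * hAR S := by
      exact_mod_cast nS_le_pow_mul_hAR hS
    have hpow : (kS S : ℝ) ^ dS S = kS S ^ (dS S - 1) * kS S := by
      rw [← pow_succ, Nat.sub_add_cancel hd]
    rw [div_le_iff₀ (by positivity), hpow]
    nlinarith
end
end

section
/- The set of triples (n(S), d(S), k(S)) over all decision rule systems S equals {(0,0,0)} ∪ {(n,d,k) : n,d,k positive integers, d ≤ n}, and the same set is attained when S ranges only over SR-reduced systems or only over AD-reduced systems. -/
open scoped Classical
noncomputable section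

/-! Every attribute of a rule lies in `A(S)` and the attributes of a well-formed rule are distinct,
so `d(S) ≤ n(S)`; all three parameters vanish exactly when every rule has empty left-hand side.
Conversely, for `1 ≤ d ≤ n` and `k ≥ 1` the rules `(a_m = j) ∧ ⋯ ∧ (a_{m+d-1} = j) → 0`
with `m ≤ n - d` and `j < k` realise `(n, d, k)`; having equal lengths, they are SR-reduced. -/

def admissibleTriples : Set (ℕ × ℕ × ℕ) :=
  {((0 : ℕ), (0 : ℕ), (0 : ℕ))} ∪
    {t : ℕ × ℕ × ℕ | 0 < t.1 ∧ 0 < t.2.1 ∧ 0 < t.2.2 ∧ t.2.1 ≤ t.1}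

variable {S : DRS}

theorem mem_AS {a : Attr} : a ∈ AS S ↔ ∃ r ∈ S, ∃ δ, (a, δ) ∈ r.1 := by
  simp [AS, Ar]

theorem mem_VS {a : Attr} {δ : ℕ} : δ ∈ VS S a ↔ ∃ r ∈ S, (a, δ) ∈ r.1 := by
  simp [VS]

theorem card_Ar {r : Rule} (hr : WFRule r) : (Ar r).card = ruleLen r :=
  Finset.card_image_of_injOn fun p hp q hq hpq => Prod.ext hpq (hr p hp q hq hpq)

theorem dS_le_nS (hS : ∀ r ∈ S, WFRule r) : dS S ≤ nS S :=
  Finset.sup_le fun r hr =>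
    card_Ar (hS r hr) ▸ Finset.card_le_card (Finset.subset_biUnion_of_mem Ar hr)

theorem params_eq_zero (hS : ∀ r ∈ S, r.1 = ∅) : nS S = 0 ∧ dS S = 0 ∧ kS S = 0 := by
  have hA : AS S = ∅ := Finset.eq_empty_of_forall_notMem fun a ha => by
    obtain ⟨r, hr, δ, hδ⟩ := mem_AS.1 ha
    simp [hS r hr] at hδ
  refine ⟨by simp [nS, hA], ?_, by simp [kS, hA]⟩
  exact Nat.eq_zero_of_le_zero <| Finset.sup_le fun r hr => by simp [ruleLen, hS r hr]

theorem params_pos {r : Rule} (hr : r ∈ S) {p : Attr × ℕ} (hp : p ∈ r.1) :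
    0 < nS S ∧ 0 < dS S ∧ 0 < kS S := by
  have ha : p.1 ∈ AS S := mem_AS.2 ⟨r, hr, p.2, hp⟩
  have hδ : p.2 ∈ VS S p.1 := mem_VS.2 ⟨r, hr, hp⟩
  refine ⟨Finset.card_pos.2 ⟨_, ha⟩, ?_, ?_⟩
  · exact (Finset.card_pos.2 ⟨p, hp⟩).trans_le (Finset.le_sup (f := ruleLen) hr)
  · exact (Finset.card_pos.2 ⟨_, hδ⟩).trans_le
      (Finset.le_sup (f := fun a => (VS S a).card) ha)

theorem params_mem_admissibleTriples (hS : WFS S) :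
    (nS S, dS S, kS S) ∈ admissibleTriples := by
  by_cases hempty : ∀ r ∈ S, r.1 = ∅
  · obtain ⟨hn, hd, hk⟩ := params_eq_zero hempty
    exact Or.inl (by simp [hn, hd, hk])
  · push Not at hempty
    obtain ⟨r, hr, p, hp⟩ := hempty
    obtain ⟨hn, hd, hk⟩ := params_pos hr hp
    exact Or.inr ⟨hn, hd, hk, dS_le_nS hS.2⟩

theorem SRred_of_ruleLen_eq {d : ℕ} (hS : ∀ r ∈ S, ruleLen r = d) : SRred S :=
  fun r hr ⟨r', hr', hlt⟩ =>
    (Finset.card_lt_card hlt).ne ((hS r' hr').trans (hS r hr).symm)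

theorem dS_eq_of_ruleLen_eq {d : ℕ} (hne : S.Nonempty) (hS : ∀ r ∈ S, ruleLen r = d) :
    dS S = d :=
  (Finset.sup_congr rfl hS).trans (Finset.sup_const hne d)

theorem SRred.ADred (hS : SRred S) : ADred S :=
  fun r hr ⟨r', hr', hlt, _⟩ => hS r hr ⟨r', hr', hlt⟩

def windowRule (d m j : ℕ) : Rule := ((Finset.range d).image fun i => (m + i, j), 0)

def windowSystem (n d k : ℕ) : DRS :=
  (Finset.range (n - d + 1) ×ˢ Finset.range k).image fun x => windowRule d x.1 x.2

variable {n d k m j : ℕ}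

theorem mem_windowRule {p : Attr × ℕ} :
    p ∈ (windowRule d m j).1 ↔ ∃ i < d, p = (m + i, j) := by
  simp [windowRule, eq_comm]

theorem mem_windowSystem {r : Rule} :
    r ∈ windowSystem n d k ↔ ∃ m ≤ n - d, ∃ j < k, r = windowRule d m j := by
  simp only [windowSystem, Finset.mem_image, Finset.mem_product, Finset.mem_range, Prod.exists]
  constructor
  · rintro ⟨m, j, ⟨hm, hj⟩, rfl⟩
    exact ⟨m, by omega, j, hj, rfl⟩
  · rintro ⟨m, hm, j, hj, rfl⟩
    exact ⟨m, j, ⟨by omega, hj⟩, rfl⟩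

theorem ruleLen_windowRule : ruleLen (windowRule d m j) = d := by
  rw [ruleLen, windowRule, Finset.card_image_of_injective _ fun i i' h => by simpa using h,
    Finset.card_range]

theorem WFRule_windowRule : WFRule (windowRule d m j) := by
  intro p hp q hq _
  obtain ⟨i, -, rfl⟩ := mem_windowRule.1 hp
  obtain ⟨i', -, rfl⟩ := mem_windowRule.1 hq
  rfl

theorem WFS_windowSystem (hk : 0 < k) : WFS (windowSystem n d k) := by
  refine ⟨⟨windowRule d 0 0, mem_windowSystem.2 ⟨0, Nat.zero_le _, 0, hk, rfl⟩⟩, ?_⟩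
  intro r hr
  obtain ⟨m, -, j, -, rfl⟩ := mem_windowSystem.1 hr
  exact WFRule_windowRule

theorem ruleLen_of_mem_windowSystem {r : Rule} (hr : r ∈ windowSystem n d k) :
    ruleLen r = d := by
  obtain ⟨m, -, j, -, rfl⟩ := mem_windowSystem.1 hr
  exact ruleLen_windowRule

theorem SRred_windowSystem : SRred (windowSystem n d k) :=
  SRred_of_ruleLen_eq fun _ => ruleLen_of_mem_windowSystem

theorem AS_windowSystem (hd : 0 < d) (hdn : d ≤ n) (hk : 0 < k) :
    AS (windowSystem n d k) = Finset.range n := by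
  ext a
  rw [mem_AS, Finset.mem_range]
  constructor
  · rintro ⟨r, hr, δ, hp⟩
    obtain ⟨m, hm, j, -, rfl⟩ := mem_windowSystem.1 hr
    obtain ⟨i, hi, ha⟩ := mem_windowRule.1 hp
    obtain ⟨rfl, -⟩ := Prod.mk.inj ha
    omega
  · intro ha
    -- the window starting at `min a (n - d)` contains `a`
    refine ⟨_, mem_windowSystem.2 ⟨min a (n - d), min_le_right _ _, 0, hk, rfl⟩, 0,
      mem_windowRule.2 ⟨a - min a (n - d), by omega, ?_⟩⟩
    simp only [Prod.mk.injEq, and_true]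
    exact (Nat.add_sub_cancel' (min_le_left _ _)).symm

theorem VS_windowSystem_subset (a : Attr) : VS (windowSystem n d k) a ⊆ Finset.range k := by
  intro δ hδ
  obtain ⟨r, hr, hp⟩ := mem_VS.1 hδ
  obtain ⟨m, -, j, hj, rfl⟩ := mem_windowSystem.1 hr
  obtain ⟨i, -, hi⟩ := mem_windowRule.1 hp
  simp only [Prod.mk.injEq] at hi
  exact Finset.mem_range.2 (hi.2 ▸ hj)

theorem VS_windowSystem_zero (hd : 0 < d) : VS (windowSystem n d k) 0 = Finset.range k := by
  refine (VS_windowSystem_subset 0).antisymm fun j hj => mem_VS.2 ?_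
  exact ⟨_, mem_windowSystem.2 ⟨0, Nat.zero_le _, j, Finset.mem_range.1 hj, rfl⟩,
    mem_windowRule.2 ⟨0, hd, rfl⟩⟩

theorem params_windowSystem (hd : 0 < d) (hdn : d ≤ n) (hk : 0 < k) :
    (nS (windowSystem n d k), dS (windowSystem n d k), kS (windowSystem n d k)) = (n, d, k) := by
  have hA := AS_windowSystem hd hdn hk
  have hdS : dS (windowSystem n d k) = d :=
    dS_eq_of_ruleLen_eq (WFS_windowSystem hk).1 fun _ => ruleLen_of_mem_windowSystem
  have hkS : kS (windowSystem n d k) = k := by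
    refine le_antisymm (Finset.sup_le fun a _ => ?_) ?_
    · simpa using Finset.card_le_card (VS_windowSystem_subset (n := n) (d := d) (k := k) a)
    · have h0 : (0 : Attr) ∈ AS (windowSystem n d k) := by
        rw [hA]
        exact Finset.mem_range.2 (hd.trans_le hdn)
      have := Finset.le_sup (f := fun a => (VS (windowSystem n d k) a).card) h0
      rwa [VS_windowSystem_zero hd, Finset.card_range] at this
  rw [nS, hA, Finset.card_range, hdS, hkS]

theorem exists_SRred_of_mem_admissibleTriples {t : ℕ × ℕ × ℕ} (ht : t ∈ admissibleTriples) :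
    ∃ S : DRS, WFS S ∧ SRred S ∧ t = (nS S, dS S, kS S) := by
  rcases ht with rfl | ⟨hn, hd, hk, hdn⟩
  · refine ⟨windowSystem 0 0 1, WFS_windowSystem one_pos, SRred_windowSystem, ?_⟩
    have hempty : ∀ r ∈ windowSystem 0 0 1, r.1 = ∅ := fun _ hr =>
      Finset.card_eq_zero.1 (ruleLen_of_mem_windowSystem hr)
    obtain ⟨hn, hd, hk⟩ := params_eq_zero hempty
    rw [hn, hd, hk]
  · exact ⟨windowSystem t.1 t.2.1 t.2.2, WFS_windowSystem hk, SRred_windowSystem,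
      (params_windowSystem hd hdn hk).symm⟩

theorem setOf_params_eq_admissibleTriples (P : DRS → Prop) (hP : ∀ S, SRred S → P S) :
    {t : ℕ × ℕ × ℕ | ∃ S : DRS, WFS S ∧ P S ∧ t = (nS S, dS S, kS S)} = admissibleTriples := by
  refine Set.Subset.antisymm ?_ fun t ht => ?_
  · rintro _ ⟨S, hS, -, rfl⟩
    exact params_mem_admissibleTriples hS
  · obtain ⟨S, hS, hSR, rfl⟩ := exists_SRred_of_mem_admissibleTriples ht
    exact ⟨S, hS, hP S hSR, rfl⟩

/-- the set of triples `(n(S), d(S), k(S))` over all systems (and over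
SR-reduced and over AD-reduced systems) equals
`{(0,0,0)} ∪ {(n,d,k) : n,d,k ≥ 1, d ≤ n}`. -/
theorem stmt18 :
    {t : ℕ × ℕ × ℕ | ∃ S : DRS, WFS S ∧ t = (nS S, dS S, kS S)} =
      ({((0 : ℕ), (0 : ℕ), (0 : ℕ))} ∪
        {t : ℕ × ℕ × ℕ | 0 < t.1 ∧ 0 < t.2.1 ∧ 0 < t.2.2 ∧ t.2.1 ≤ t.1}) ∧
    {t : ℕ × ℕ × ℕ | ∃ S : DRS, WFS S ∧ SRred S ∧ t = (nS S, dS S, kS S)} =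
      ({((0 : ℕ), (0 : ℕ), (0 : ℕ))} ∪
        {t : ℕ × ℕ × ℕ | 0 < t.1 ∧ 0 < t.2.1 ∧ 0 < t.2.2 ∧ t.2.1 ≤ t.1}) ∧
    {t : ℕ × ℕ × ℕ | ∃ S : DRS, WFS S ∧ ADred S ∧ t = (nS S, dS S, kS S)} =
      ({((0 : ℕ), (0 : ℕ), (0 : ℕ))} ∪
        {t : ℕ × ℕ × ℕ | 0 < t.1 ∧ 0 < t.2.1 ∧ 0 < t.2.2 ∧ t.2.1 ≤ t.1}) := by
  have hall := setOf_params_eq_admissibleTriples (fun _ => True) fun _ _ => trivial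
  simp only [true_and] at hall
  exact ⟨hall, setOf_params_eq_admissibleTriples SRred fun _ h => h,
    setOf_params_eq_admissibleTriples ADred fun _ h => h.ADred⟩
end
end
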